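/- arXiv:1711.03531 — 4 statements merged into one kernel-verified Lean document; each statement's English description precedes it below -/
import Mathlib

section
/- For any morphism h : 𝒢₁ → 𝒢₂ of connected concrete groupoids, the identity morphisms are two-sided identities for composition: id_{𝒢₂}∘h = h and h∘id_{𝒢₁} = h, as families of sets of functions. -/
universe u v

/-- A concrete groupoid: an index type `I`, object sets `O i`, and for each pair
`(i,j)` a set `Hom i j` of functions `O i → O j`, each of which is a bijection,
closed under composition and inverses. -/
structure ConcreteGroupoid where
  I : Type u
  O : I → Type v
  Hom : ∀ i j : I, Set (O i → O j)
  bij_of_mem : ∀ {i j : I} {f : O i → O j}, f ∈ Hom i j → Function.Bijective f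
  comp_mem : ∀ {i j k : I} {f : O i → O j} {g : O j → O k},
      f ∈ Hom i j → g ∈ Hom j k → (g ∘ f) ∈ Hom i k
  inv_mem : ∀ {i j : I} {f : O i → O j}, f ∈ Hom i j →
      ∃ g ∈ Hom j i, (∀ x, g (f x) = x) ∧ (∀ y, f (g y) = y)

/-- A concrete groupoid is connected if there is a morphism between any two objects. -/
def ConcreteGroupoid.Connected (G : ConcreteGroupoid.{u, v}) : Prop :=
  ∀ i j : G.I, (G.Hom i j).Nonempty

/-- The data of a candidate morphism between concrete groupoids: for each pair of
indices, a set of functions between the corresponding object sets. -/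
def GpdFam (G₁ G₂ : ConcreteGroupoid.{u, v}) : Type (max u v) :=
  ∀ (i₁ : G₁.I) (i₂ : G₂.I), Set (G₁.O i₁ → G₂.O i₂)

/-- Conditions for a family `h` to be a morphism of (connected) concrete groupoids:
each set is nonempty, and conditions (A) and (B) hold. -/
structure IsGpdMorphism (G₁ G₂ : ConcreteGroupoid.{u, v}) (h : GpdFam G₁ G₂) : Prop where
  nonempty : ∀ (i₁ : G₁.I) (i₂ : G₂.I), (h i₁ i₂).Nonempty
  condA : ∀ (i₁ j₁ : G₁.I) (i₂ j₂ : G₂.I)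
      (p : G₁.O i₁ → G₂.O i₂) (q : G₁.O j₁ → G₂.O j₂),
      p ∈ h i₁ i₂ → q ∈ h j₁ j₂ →
      {f : G₁.O i₁ → G₂.O j₂ | ∃ γ ∈ G₁.Hom i₁ j₁, f = q ∘ γ} =
        {f : G₁.O i₁ → G₂.O j₂ | ∃ δ ∈ G₂.Hom i₂ j₂, f = δ ∘ p}
  condB : ∀ (i : G₁.I) (j k : G₂.I) (p : G₁.O i → G₂.O j) (f : G₂.O j → G₂.O k),
      p ∈ h i j → f ∈ G₂.Hom j k → (f ∘ p) ∈ h i k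

/-- Composition of morphism families: `(compFam g h)` is the family `h ∘ g`
(first apply `g`, then `h`). -/
def compFam {G₁ G₂ G₃ : ConcreteGroupoid.{u, v}}
    (g : GpdFam G₁ G₂) (h : GpdFam G₂ G₃) : GpdFam G₁ G₃ :=
  fun i₁ i₃ => {r | ∃ i₂ : G₂.I, ∃ p ∈ g i₁ i₂, ∃ q ∈ h i₂ i₃, r = q ∘ p}

/-- The identity morphism family of a concrete groupoid. -/
def idFam (G : ConcreteGroupoid.{u, v}) : GpdFam G G := G.Hom

/-- A family is an isomorphism if it is a morphism with a two-sided inverse morphism. -/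
def IsGpdIsomorphism (G₁ G₂ : ConcreteGroupoid.{u, v}) (h : GpdFam G₁ G₂) : Prop :=
  IsGpdMorphism G₁ G₂ h ∧ ∃ g : GpdFam G₂ G₁, IsGpdMorphism G₂ G₁ g ∧
    compFam h g = idFam G₁ ∧ compFam g h = idFam G₂

/-- the identity morphisms are two-sided identities for composition of
morphisms of connected concrete groupoids. -/
theorem idFam_comp_and_comp_idFam
    (G₁ G₂ : ConcreteGroupoid.{u, v})
    (hG₁ : G₁.Connected) (hG₂ : G₂.Connected)
    (h : GpdFam G₁ G₂) (hm : IsGpdMorphism G₁ G₂ h) :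
    compFam h (idFam G₂) = h ∧ compFam (idFam G₁) h = h := by
  constructor
  · funext i₁ i₃
    ext r
    constructor
    · rintro ⟨i₂, p, hp, q, hq, rfl⟩
      exact hm.condB _ _ _ p q hp hq
    · intro hr
      obtain ⟨f, hf⟩ := hG₂ i₃ i₃
      obtain ⟨g, hg, hgf, hfg⟩ := G₂.inv_mem hf
      refine ⟨i₃, r, hr, g ∘ f, G₂.comp_mem hf hg, ?_⟩
      funext x; simp [hgf]
  · funext i₁ i₃
    ext r
    constructor
    · rintro ⟨i₂, γ, hγ, q, hq, rfl⟩
      obtain ⟨p, hp⟩ := hm.nonempty i₁ i₃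
      have hA := hm.condA i₁ i₂ i₃ i₃ p q hp hq
      have : q ∘ γ ∈ {f : G₁.O i₁ → G₂.O i₃ | ∃ γ' ∈ G₁.Hom i₁ i₂, f = q ∘ γ'} :=
        ⟨γ, hγ, rfl⟩
      rw [hA] at this
      obtain ⟨δ, hδ, hδe⟩ := this
      rw [hδe]
      exact hm.condB _ _ _ p δ hp hδ
    · intro hr
      obtain ⟨f, hf⟩ := hG₁ i₁ i₁
      obtain ⟨g, hg, hgf, hfg⟩ := G₁.inv_mem hf
      have hA := hm.condA i₁ i₁ i₃ i₃ r r hr hr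
      have : r ∘ g ∈ {F : G₁.O i₁ → G₂.O i₃ | ∃ γ ∈ G₁.Hom i₁ i₁, F = r ∘ γ} :=
        ⟨g, hg, rfl⟩
      rw [hA] at this
      obtain ⟨δ, hδ, hδe⟩ := this
      refine ⟨i₁, f, hf, r ∘ g, ?_, ?_⟩
      · rw [hδe]; exact hm.condB _ _ _ r δ hr hδ
      · funext x; simp [hgf]
end

section
/- Let h : 𝒢₁ → 𝒢₂ be a morphism of connected concrete groupoids. If some member p ∈ h(i₁,i₂) is a bijection, then every member of every set h(j₁,j₂) is a bijection. -/
universe u v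

/-- if some member of a morphism of connected concrete groupoids is a
bijection, then every member is a bijection. -/
theorem all_bijective_of_some_bijective
    (G₁ G₂ : ConcreteGroupoid.{u, v})
    (hG₁ : G₁.Connected) (hG₂ : G₂.Connected)
    (h : GpdFam G₁ G₂) (hm : IsGpdMorphism G₁ G₂ h)
    (i₁ : G₁.I) (i₂ : G₂.I) (p : G₁.O i₁ → G₂.O i₂)
    (hp : p ∈ h i₁ i₂) (hpbij : Function.Bijective p) :
    ∀ (j₁ : G₁.I) (j₂ : G₂.I) (q : G₁.O j₁ → G₂.O j₂), q ∈ h j₁ j₂ →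
      Function.Bijective q := by
  intro j₁ j₂ q hq
  obtain ⟨γ, hγ⟩ := hG₁ i₁ j₁
  have hA := hm.condA i₁ j₁ i₂ j₂ p q hp hq
  have hmem : (q ∘ γ) ∈ {f : G₁.O i₁ → G₂.O j₂ | ∃ γ' ∈ G₁.Hom i₁ j₁, f = q ∘ γ'} :=
    ⟨γ, hγ, rfl⟩
  rw [hA] at hmem
  obtain ⟨δ, hδ, heq⟩ := hmem
  obtain ⟨g, -, hgl, hgr⟩ := G₁.inv_mem hγ
  have hqeq : q = (δ ∘ p) ∘ g := by
    funext x
    have : (q ∘ γ) (g x) = ((δ ∘ p) ∘ g) x := by rw [heq]; rfl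
    simpa [hgr x] using this
  rw [hqeq]
  exact ((G₂.bij_of_mem hδ).comp hpbij).comp
    ⟨fun a b hab => by rw [← hgr a, ← hgr b, hab],
     fun y => ⟨γ y, hgl y⟩⟩
end

section
/- Let h : 𝒢₁ → 𝒢₂ be a morphism of connected concrete groupoids and let p ∈ h(i₁,i₂). Then for all j₁ ∈ I₁ and j₂ ∈ I₂, h(j₁,j₂) = {δ∘p∘γ : γ ∈ Hom_{𝒢₁}(j₁,i₁), δ ∈ Hom_{𝒢₂}(i₂,j₂)}. In particular, a morphism of connected concrete groupoids is completely determined by any single one of its members. -/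
universe u v

/-- a morphism of connected concrete groupoids is completely determined
by any single one of its members: `h(j₁,j₂) = {δ∘p∘γ}`. -/
theorem morphism_determined_by_member
    (G₁ G₂ : ConcreteGroupoid.{u, v})
    (hG₁ : G₁.Connected) (hG₂ : G₂.Connected)
    (h : GpdFam G₁ G₂) (hm : IsGpdMorphism G₁ G₂ h)
    (i₁ : G₁.I) (i₂ : G₂.I) (p : G₁.O i₁ → G₂.O i₂) (hp : p ∈ h i₁ i₂) :
    ∀ (j₁ : G₁.I) (j₂ : G₂.I),
      h j₁ j₂ = {f : G₁.O j₁ → G₂.O j₂ |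
        ∃ γ ∈ G₁.Hom j₁ i₁, ∃ δ ∈ G₂.Hom i₂ j₂, f = δ ∘ p ∘ γ} := by
  intro j₁ j₂
  ext q
  constructor
  · intro hq
    obtain ⟨γ₀, hγ₀⟩ := hG₁ i₁ j₁
    have hA := hm.condA i₁ j₁ i₂ j₂ p q hp hq
    have : q ∘ γ₀ ∈ {f : G₁.O i₁ → G₂.O j₂ | ∃ δ ∈ G₂.Hom i₂ j₂, f = δ ∘ p} := by
      rw [← hA]; exact ⟨γ₀, hγ₀, rfl⟩
    obtain ⟨δ, hδ, hqδ⟩ := this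
    obtain ⟨γinv, hγinv, hli, hri⟩ := G₁.inv_mem hγ₀
    refine ⟨γinv, hγinv, δ, hδ, ?_⟩
    funext x
    have := congrFun hqδ (γinv x)
    simpa [Function.comp, hri x] using this
  · rintro ⟨γ, hγ, δ, hδ, rfl⟩
    obtain ⟨q₀, hq₀⟩ := hm.nonempty j₁ i₂
    have hA := hm.condA j₁ i₁ i₂ i₂ q₀ p hq₀ hp
    have : p ∘ γ ∈ {f : G₁.O j₁ → G₂.O i₂ | ∃ δ' ∈ G₂.Hom i₂ i₂, f = δ' ∘ q₀} := by
      rw [← hA]; exact ⟨γ, hγ, rfl⟩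
    obtain ⟨δ', hδ', hpγ⟩ := this
    have hmem : p ∘ γ ∈ h j₁ i₂ := by
      rw [hpγ]; exact hm.condB j₁ i₂ i₂ q₀ δ' hq₀ hδ'
    exact hm.condB j₁ i₂ j₂ (p ∘ γ) δ hmem hδ
end

section
/- Let 𝒢₁ and 𝒢₂ be connected concrete groupoids, fix i₁ ∈ I₁ and i₂ ∈ I₂, and let u : O₁_{i₁} → O₂_{i₂} be a function satisfying {u∘γ : γ ∈ Aut_{𝒢₁}(i₁)} = {δ∘u : δ ∈ Aut_{𝒢₂}(i₂)}. Then the family h given by h(j₁,j₂) := {δ∘u∘γ : γ ∈ Hom_{𝒢₁}(j₁,i₁), δ ∈ Hom_{𝒢₂}(i₂,j₂)} is a morphism from 𝒢₁ to 𝒢₂. -/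
universe u v

/-- given a function `u : O₁_{i₁} → O₂_{i₂}` with
`{u∘γ : γ ∈ Aut_{𝒢₁}(i₁)} = {δ∘u : δ ∈ Aut_{𝒢₂}(i₂)}`, the family
`h(j₁,j₂) := {δ∘u∘γ : γ ∈ Hom_{𝒢₁}(j₁,i₁), δ ∈ Hom_{𝒢₂}(i₂,j₂)}` is a morphism. -/
theorem morphism_generated_by_function
    (G₁ G₂ : ConcreteGroupoid.{u, v})
    (hG₁ : G₁.Connected) (hG₂ : G₂.Connected)
    (i₁ : G₁.I) (i₂ : G₂.I) (u : G₁.O i₁ → G₂.O i₂)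
    (hu : {f : G₁.O i₁ → G₂.O i₂ | ∃ γ ∈ G₁.Hom i₁ i₁, f = u ∘ γ} =
          {f : G₁.O i₁ → G₂.O i₂ | ∃ δ ∈ G₂.Hom i₂ i₂, f = δ ∘ u}) :
    IsGpdMorphism G₁ G₂
      (fun (j₁ : G₁.I) (j₂ : G₂.I) =>
        {f : G₁.O j₁ → G₂.O j₂ |
          ∃ γ ∈ G₁.Hom j₁ i₁, ∃ δ ∈ G₂.Hom i₂ j₂, f = δ ∘ u ∘ γ}) := by
  constructor
  · intro j₁ j₂
    obtain ⟨γ, hγ⟩ := hG₁ j₁ i₁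
    obtain ⟨δ, hδ⟩ := hG₂ i₂ j₂
    exact ⟨δ ∘ u ∘ γ, γ, hγ, δ, hδ, rfl⟩
  · intro j₁ k₁ j₂ k₂ p q hp hq
    obtain ⟨γp, hγp, δp, hδp, hpeq⟩ := hp
    obtain ⟨γq, hγq, δq, hδq, hqeq⟩ := hq
    obtain ⟨γp', hγp', hlp, hrp⟩ := G₁.inv_mem hγp
    obtain ⟨δp', hδp', hlp2, hrp2⟩ := G₂.inv_mem hδp
    obtain ⟨γq', hγq', hlq, hrq⟩ := G₁.inv_mem hγq
    obtain ⟨δq', hδq', hlq2, hrq2⟩ := G₂.inv_mem hδq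
    ext f
    constructor
    · rintro ⟨γ, hγ, rfl⟩
      have hmem : (u ∘ (γq ∘ γ ∘ γp')) ∈
          {f : G₁.O i₁ → G₂.O i₂ | ∃ γ ∈ G₁.Hom i₁ i₁, f = u ∘ γ} :=
        ⟨γq ∘ γ ∘ γp', G₁.comp_mem (G₁.comp_mem hγp' hγ) hγq, rfl⟩
      rw [hu] at hmem
      obtain ⟨δ₀, hδ₀, heq⟩ := hmem
      refine ⟨δq ∘ δ₀ ∘ δp', G₂.comp_mem (G₂.comp_mem hδp' hδ₀) hδq, ?_⟩
      subst hpeq hqeq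
      funext x
      have h1 := congrFun heq (γp x)
      simp only [Function.comp_apply] at h1 ⊢
      rw [hlp] at h1
      rw [hlp2, h1]
    · rintro ⟨δ, hδ, rfl⟩
      have hmem : ((δq' ∘ δ ∘ δp) ∘ u) ∈
          {f : G₁.O i₁ → G₂.O i₂ | ∃ δ ∈ G₂.Hom i₂ i₂, f = δ ∘ u} :=
        ⟨δq' ∘ δ ∘ δp, G₂.comp_mem (G₂.comp_mem hδp hδ) hδq', rfl⟩
      rw [← hu] at hmem
      obtain ⟨γ₀, hγ₀, heq⟩ := hmem
      refine ⟨γq' ∘ γ₀ ∘ γp, G₁.comp_mem (G₁.comp_mem hγp hγ₀) hγq', ?_⟩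
      subst hpeq hqeq
      funext x
      have h1 := congrFun heq (γp x)
      simp only [Function.comp_apply] at h1 ⊢
      rw [hrq, ← h1, hrq2]
  · intro i j k p f hp hf
    obtain ⟨γ, hγ, δ, hδ, hpeq⟩ := hp
    exact ⟨γ, hγ, f ∘ δ, G₂.comp_mem hδ hf, by subst hpeq; rfl⟩
end
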